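/- Set Cover reduces to Boolean Set Cover: when N = ∅, a positive Boolean formula θ over 𝓕 satisfies ⟦θ⟧ = P iff the sets of 𝓕 occurring in θ whose contribution survives cover P; in particular, for any formula θ with ⟦θ⟧ = P there is a formula θ' using only unions with ⟦θ'⟧ = P and weight wt(θ') ≤ wt(θ). -/
import Mathlib


/-- Positive Boolean formulas over an index type `ι` of atoms. -/
inductive PBF (ι : Type) : Type where
  | empty : PBF ι
  | atom : ι → PBF ι
  | union : PBF ι → PBF ι → PBF ι
  | inter : PBF ι → PBF ι → PBF ι
deriving DecidableEq

/-- Interpretation of a positive Boolean formula, given the sets denoted by atoms. -/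
def PBF.eval {ι α : Type} (val : ι → Set α) : PBF ι → Set α
  | .empty => ∅
  | .atom i => val i
  | .union a b => a.eval val ∪ b.eval val
  | .inter a b => a.eval val ∩ b.eval val

/-- Weight of a positive Boolean formula, given weights of the atoms. -/
def PBF.wt {ι : Type} (w : ι → ℕ) : PBF ι → ℕ
  | .empty => 0
  | .atom i => w i
  | .union a b => 1 + a.wt w + b.wt w
  | .inter a b => 1 + a.wt w + b.wt w

/-- The set of elements of `P ∪ N` correctly classified by a set `S`. -/
def satSet {α : Type} (P N S : Set α) : Set α := (S ∩ P) ∪ (N \ S)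

/-- A positive Boolean formula using only unions (no intersections). -/
def PBF.unionOnly {ι : Type} : PBF ι → Prop
  | .empty => True
  | .atom _ => True
  | .union a b => a.unionOnly ∧ b.unionOnly
  | .inter _ _ => False

/-- Replace every intersection by its left argument. -/
def PBF.toU {ι : Type} : PBF ι → PBF ι
  | .empty => .empty
  | .atom i => .atom i
  | .union a b => .union a.toU b.toU
  | .inter a _ => a.toU

theorem PBF.toU_unionOnly {ι : Type} (θ : PBF ι) : θ.toU.unionOnly := by
  induction θ <;> simp_all [PBF.toU, PBF.unionOnly]

theorem PBF.toU_wt {ι : Type} (w : ι → ℕ) (θ : PBF ι) : θ.toU.wt w ≤ θ.wt w := by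
  induction θ <;> simp_all [PBF.toU, PBF.wt] <;> omega

theorem PBF.toU_eval {ι α : Type} (val : ι → Set α) (θ : PBF ι) :
    θ.eval val ⊆ θ.toU.eval val := by
  induction θ with
  | empty => simp [PBF.toU]
  | atom i => simp [PBF.toU]
  | union a b ha hb => exact Set.union_subset_union ha hb
  | inter a b ha hb => exact Set.inter_subset_left.trans ha

theorem PBF.eval_subset {ι α : Type} (P : Set α) (val : ι → Set α)
    (hF : ∀ i, val i ⊆ P) (θ : PBF ι) : θ.eval val ⊆ P := by
  induction θ with
  | empty => simp [PBF.eval]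
  | atom i => exact hF i
  | union a b ha hb => exact Set.union_subset ha hb
  | inter a b ha hb => exact Set.inter_subset_left.trans ha

/-- when `N = ∅` (the family consists of subsets of `P`), any formula
`θ` with `⟦θ⟧ = P` can be replaced by a union-only formula `θ'` with `⟦θ'⟧ = P`
and weight at most that of `θ`. -/
theorem stmt_19 {ι α : Type} (P : Set α) (hP : P.Finite)
    (val : ι → Set α) (w : ι → ℕ) (hw : ∀ i, 1 ≤ w i)
    (hF : ∀ i, val i ⊆ P) (θ : PBF ι) (hθ : θ.eval val = P) :
    ∃ θ' : PBF ι, θ'.unionOnly ∧ θ'.eval val = P ∧ θ'.wt w ≤ θ.wt w := by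
  refine ⟨PBF.toU θ, PBF.toU_unionOnly θ, ?_, PBF.toU_wt w θ⟩
  apply Set.Subset.antisymm (PBF.eval_subset P val hF _)
  exact hθ ▸ PBF.toU_eval val θ
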